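/- arXiv:2402.14050 — 6 statements merged into one kernel-verified Lean document; each statement's English description precedes it below -/
import Mathlib

section
/- For every k ∈ ℤ there exists a constant C_k > 0 such that for all r, t ∈ ℝ one has |S_k(r,t)| ≤ C_k · (1 + ((1+|2r−t|)/(1+|r|))^{|k|}). -/
/-!
Bound each summand of `S_k(r,t)` separately. A Pochhammer symbol satisfies
`|(b)_m| ≤ (|b| + m)^m`, and `|(b)_m| ≥ |b|^m` when `Re b ≥ 0` (then `|b + j| ≥ |b|`). As `m ≤ |k|`,
the numerator of the `m`-th summand is `O_k((1+|2r-t|)(1+|t|))^m` and its denominator is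
`≫ ((1+|r|)(1+|t|))^m`; the factor `1+|t|` cancels, leaving `(A_k X)^m` with
`X = (1+|2r-t|)/(1+|r|)`, and `X^m ≤ 1 + X^{|k|}`.
-/

/-- The rising factorial (Pochhammer symbol) `(b)_m = b(b+1)⋯(b+m-1)`, with `(b)_0 = 1`. -/
noncomputable def poch (b : ℂ) (m : ℕ) : ℂ := ∏ j ∈ Finset.range m, (b + j)

/-- The terminating hypergeometric sum
`S_k(r,t) = ₄F₃(-k, k, 1/4 + i(-2r+t)/2, 1/4 + it/2; 1/2, 1/2 - ir, 1/2 + it; 1)`. -/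
noncomputable def hypS (k : ℤ) (r t : ℝ) : ℂ :=
  ∑ m ∈ Finset.range (k.natAbs + 1),
    (poch (-(k : ℂ)) m * poch (k : ℂ) m * poch (1/4 + Complex.I * (-(2*r) + t) / 2) m *
        poch (1/4 + Complex.I * t / 2) m) /
    (poch (1/2) m * poch (1/2 - Complex.I * r) m * poch (1/2 + Complex.I * t) m *
        (Nat.factorial m : ℂ))

open Finset Complex

noncomputable def hypNum (k : ℤ) (r t : ℝ) (m : ℕ) : ℂ :=
  poch (-(k : ℂ)) m * poch (k : ℂ) m * poch (1/4 + I * (-(2*r) + t) / 2) m *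
    poch (1/4 + I * t / 2) m

noncomputable def hypDen (r t : ℝ) (m : ℕ) : ℂ :=
  poch (1/2) m * poch (1/2 - I * r) m * poch (1/2 + I * t) m * (m.factorial : ℂ)

lemma hypS_eq_sum (k : ℤ) (r t : ℝ) :
    hypS k r t = ∑ m ∈ range (k.natAbs + 1), hypNum k r t m / hypDen r t m :=
  rfl

lemma norm_poch_le (b : ℂ) (m : ℕ) : ‖poch b m‖ ≤ (‖b‖ + m) ^ m := by
  have hfactor (j : ℕ) (hj : j ∈ range m) : ‖b + j‖ ≤ ‖b‖ + m := by
    refine (norm_add_le _ _).trans ?_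
    rw [Complex.norm_natCast]
    gcongr
    exact_mod_cast (mem_range.mp hj).le
  rw [poch, norm_prod]
  calc ∏ j ∈ range m, ‖b + j‖ ≤ ∏ _j ∈ range m, (‖b‖ + m) :=
        prod_le_prod (fun _ _ => norm_nonneg _) hfactor
    _ = (‖b‖ + m) ^ m := by rw [prod_const, card_range]

lemma norm_poch_le_pow {b : ℂ} {m : ℕ} {c : ℝ} (h : ‖b‖ + m ≤ c) : ‖poch b m‖ ≤ c ^ m :=
  (norm_poch_le b m).trans (pow_le_pow_left₀ (by positivity) h m)

lemma norm_le_norm_add_natCast {b : ℂ} (hb : 0 ≤ b.re) (j : ℕ) : ‖b‖ ≤ ‖b + j‖ := by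
  refine (pow_le_pow_iff_left₀ (norm_nonneg _) (norm_nonneg _) two_ne_zero).mp ?_
  simp only [Complex.sq_norm, Complex.normSq_apply, add_re, add_im, natCast_re, natCast_im]
  nlinarith [(j.cast_nonneg : (0 : ℝ) ≤ j)]

lemma pow_le_norm_poch {b : ℂ} (hb : 0 ≤ b.re) {c : ℝ} (hc : 0 ≤ c) (h : c ≤ ‖b‖) (m : ℕ) :
    c ^ m ≤ ‖poch b m‖ := by
  rw [poch, norm_prod]
  calc c ^ m = ∏ _j ∈ range m, c := by rw [prod_const, card_range]
    _ ≤ ∏ j ∈ range m, ‖b + j‖ :=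
        prod_le_prod (fun _ _ => hc) fun j _ => h.trans (norm_le_norm_add_natCast hb j)

lemma norm_quarter_add_le (s : ℝ) : ‖1/4 + I * s / 2‖ ≤ 1 + |s| := by
  refine (norm_add_le _ _).trans ?_
  simp only [norm_div, norm_mul, Complex.norm_I, Complex.norm_real, Real.norm_eq_abs]
  norm_num
  linarith [abs_nonneg s]

lemma one_add_abs_le_three_mul_norm (s : ℝ) : 1 + |s| ≤ 3 * ‖1/2 + I * s‖ := by
  have hre := Complex.abs_re_le_norm (1/2 + I * s)
  have him := Complex.abs_im_le_norm (1/2 + I * s)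
  norm_num at hre him
  linarith

lemma norm_hypNum_le (k : ℤ) (r t : ℝ) {m : ℕ} (hm : m ≤ k.natAbs) :
    ‖hypNum k r t m‖ ≤ (4 * (k.natAbs + 1) ^ 4 * (1 + |2*r - t|) * (1 + |t|)) ^ m := by
  have hmK : (m : ℝ) ≤ k.natAbs := by exact_mod_cast hm
  have hk : ‖(k : ℂ)‖ = k.natAbs := by rw [Complex.norm_intCast, Nat.cast_natAbs, Int.cast_abs]
  have hquarter (s : ℝ) : ‖1/4 + I * s / 2‖ + m ≤ (k.natAbs + 1) * (1 + |s|) := by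
    nlinarith [norm_quarter_add_le s, abs_nonneg s]
  have h2rt := hquarter (-(2*r) + t)
  push_cast at h2rt
  rw [neg_add_eq_sub (2*r) t, abs_sub_comm] at h2rt
  rw [show (4 * (k.natAbs + 1 : ℝ) ^ 4 * (1 + |2*r - t|) * (1 + |t|)) ^ m =
      (2 * (k.natAbs + 1 : ℝ)) ^ m * (2 * (k.natAbs + 1 : ℝ)) ^ m *
        ((k.natAbs + 1) * (1 + |2*r - t|)) ^ m * ((k.natAbs + 1) * (1 + |t|)) ^ m by
      rw [← mul_pow, ← mul_pow, ← mul_pow]; ring_nf]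
  simp only [hypNum, norm_mul]
  gcongr
  · exact norm_poch_le_pow (by rw [norm_neg, hk]; linarith)
  · exact norm_poch_le_pow (by rw [hk]; linarith)
  · exact norm_poch_le_pow h2rt
  · exact norm_poch_le_pow (hquarter t)

lemma pow_le_norm_hypDen (r t : ℝ) (m : ℕ) :
    ((1 + |r|) * (1 + |t|) / 18) ^ m ≤ ‖hypDen r t m‖ := by
  have hr : 1 + |r| ≤ 3 * ‖1/2 - I * r‖ := by
    simpa [sub_eq_add_neg] using one_add_abs_le_three_mul_norm (-r)
  rw [show ((1 + |r|) * (1 + |t|) / 18) ^ m =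
      (1/2) ^ m * ((1 + |r|) / 3) ^ m * ((1 + |t|) / 3) ^ m * 1 by
        rw [mul_one, ← mul_pow, ← mul_pow]; ring_nf]
  simp only [hypDen, norm_mul]
  gcongr
  · exact pow_le_norm_poch (by norm_num) (by norm_num) (by norm_num) m
  · exact pow_le_norm_poch (by simp) (by positivity) (by linarith) m
  · exact pow_le_norm_poch (by simp) (by positivity)
      (by linarith [one_add_abs_le_three_mul_norm t]) m
  · rw [Complex.norm_natCast]
    exact_mod_cast m.factorial_pos

lemma norm_hypTerm_le (k : ℤ) (r t : ℝ) {m : ℕ} (hm : m ≤ k.natAbs) :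
    ‖hypNum k r t m / hypDen r t m‖ ≤
      (72 * (k.natAbs + 1) ^ 4 * ((1 + |2*r - t|) / (1 + |r|))) ^ m := by
  have hden : 0 < (1 + |r|) * (1 + |t|) / 18 := by positivity
  rw [norm_div]
  refine (div_le_div₀ (by positivity) (norm_hypNum_le k r t hm) (pow_pos hden m)
    (pow_le_norm_hypDen r t m)).trans_eq ?_
  rw [← div_pow]
  congr 1
  field_simp
  ring

lemma pow_le_pow_mul_one_add_pow {A X : ℝ} (hA : 1 ≤ A) (hX : 0 ≤ X) {m K : ℕ} (h : m ≤ K) :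
    (A * X) ^ m ≤ A ^ K * (1 + X ^ K) := by
  have hXm : X ^ m ≤ 1 + X ^ K := by
    rcases le_or_gt X 1 with hX1 | hX1
    · linarith [pow_le_one₀ hX hX1 (n := m), pow_nonneg hX K]
    · linarith [pow_le_pow_right₀ hX1.le h]
  rw [mul_pow]
  exact mul_le_mul (pow_le_pow_right₀ hA h) hXm (by positivity) (by positivity)

/-- (Lemma `4F3bound`.) For every `k ∈ ℤ` there is `C_k > 0` with
`|S_k(r,t)| ≤ C_k (1 + ((1+|2r-t|)/(1+|r|))^{|k|})` for all `r, t ∈ ℝ`. -/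
theorem stmt2 (k : ℤ) :
    ∃ C : ℝ, 0 < C ∧ ∀ r t : ℝ,
      ‖hypS k r t‖ ≤
        C * (1 + ((1 + |2*r - t|) / (1 + |r|)) ^ k.natAbs) := by
  set K := k.natAbs
  set A : ℝ := 72 * (K + 1) ^ 4
  have hA : 1 ≤ A := by
    have : (1 : ℝ) ≤ (K + 1) ^ 4 := one_le_pow₀ (by simp)
    linarith
  refine ⟨(K + 1) * A ^ K, by positivity, fun r t => ?_⟩
  set X := (1 + |2*r - t|) / (1 + |r|)
  calc ‖hypS k r t‖ ≤ ∑ m ∈ range (K + 1), ‖hypNum k r t m / hypDen r t m‖ := by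
        rw [hypS_eq_sum]
        exact norm_sum_le _ _
    _ ≤ ∑ _m ∈ range (K + 1), A ^ K * (1 + X ^ K) := sum_le_sum fun m hm =>
        have hmK := mem_range_succ_iff.mp hm
        (norm_hypTerm_le k r t hmK).trans (pow_le_pow_mul_one_add_pow hA (by positivity) hmK)
    _ = (K + 1) * A ^ K * (1 + X ^ K) := by
        rw [sum_const, card_range, nsmul_eq_mul]
        push_cast
        ring
end

section
/- For every k ∈ ℤ there exists a constant C_k > 0 such that for all integers m with 0 ≤ m ≤ |k| and all r, t ∈ ℝ one has |Γ(m + 1/4 + i(t−2r)/2) · Γ(m + 1/4 + it/2) · Γ(1/2 − ir) · Γ(1/2 + it)| / |Γ(1/4 + i(t−2r)/2) · Γ(1/4 + it/2) · Γ(1/2 + m − ir) · Γ(1/2 + m + it)| ≤ C_k · ((1+|2r−t|)/(1+|r|))^m. -/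
/-!
By `Γ(z + 1) = z Γ(z)`, the quotient equals `∏_{j<m} |(a + j)(b + j)| / |(c + j)(d + j)|` with
`a = 1/4 + i(t-2r)/2`, `b = 1/4 + it/2`, `c = 1/2 - ir`, `d = 1/2 + it`. In the `j`-th factor
`|a + j| ≤ (j + 1)(1 + |2r - t|)`, `|b + j| ≤ |d + j|` and `|c + j| ≥ (1 + |r|)/4`, so the factor is at
most `4(j + 1)(1 + |2r - t|)/(1 + |r|)`, and one may take `C_k = 4^|k| |k|!`.
-/

open Complex Finset Nat

lemma ascPochhammer_eval_eq_prod_range {R : Type*} [CommSemiring R] (n : ℕ) (r : R) :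
    (ascPochhammer R n).eval r = ∏ j ∈ range n, (r + j) := by
  induction n with
  | zero => simp
  | succ n ih => simp [ascPochhammer_succ_right, ih, prod_range_succ]

namespace Complex

lemma ne_neg_natCast_of_re_pos {z : ℂ} (hz : 0 < z.re) (k : ℕ) : z ≠ -k := by
  rintro rfl
  exact (show (k : ℝ) < 0 by simpa using hz).not_ge k.cast_nonneg

lemma Gamma_add_nat_eq_prod_mul {z : ℂ} (hz : ∀ k : ℕ, z ≠ -k) (n : ℕ) :
    Gamma (z + n) = (∏ j ∈ range n, (z + j)) * Gamma z := by
  rw [← ascPochhammer_eval_eq_prod_range, ← Gamma_add_nat_div_Gamma_eq z hz,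
    div_mul_cancel₀ _ (Gamma_ne_zero hz)]

lemma norm_Gamma_ratio_eq_prod {a b c d : ℂ} (ha : ∀ k : ℕ, a ≠ -k) (hb : ∀ k : ℕ, b ≠ -k)
    (hc : ∀ k : ℕ, c ≠ -k) (hd : ∀ k : ℕ, d ≠ -k) (n : ℕ) :
    ‖Gamma (a + n) * Gamma (b + n) * Gamma c * Gamma d‖ /
        ‖Gamma a * Gamma b * Gamma (c + n) * Gamma (d + n)‖ =
      ∏ j ∈ range n, ‖(a + j) * (b + j)‖ / ‖(c + j) * (d + j)‖ := by
  have hprod {z : ℂ} (hz : ∀ k : ℕ, z ≠ -k) : ∏ j ∈ range n, (z + j) ≠ 0 :=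
    prod_ne_zero_iff.mpr fun j _ => by rw [Ne, add_eq_zero_iff_eq_neg]; exact hz j
  simp_rw [← norm_div, ← norm_prod]
  congr 1
  rw [Gamma_add_nat_eq_prod_mul ha, Gamma_add_nat_eq_prod_mul hb, Gamma_add_nat_eq_prod_mul hc,
    Gamma_add_nat_eq_prod_mul hd, prod_div_distrib, prod_mul_distrib, prod_mul_distrib]
  field_simp [hprod hc, hprod hd, Gamma_ne_zero ha, Gamma_ne_zero hb, Gamma_ne_zero hc,
    Gamma_ne_zero hd]

lemma norm_pochhammer_factor_ratio_le (x r t : ℝ) (hx : 0 ≤ x) :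
    ‖(1/4 + I*(t-2*r)/2 + x) * (1/4 + I*t/2 + x)‖ / ‖(1/2 - I*r + x) * (1/2 + I*t + x)‖ ≤
      4 * (x + 1) * ((1 + |2*r - t|) / (1 + |r|)) := by
  set A : ℂ := 1/4 + I*(t-2*r)/2 + x
  set B : ℂ := 1/4 + I*t/2 + x
  set C : ℂ := 1/2 - I*r + x
  set D : ℂ := 1/2 + I*t + x
  have hAre : A.re = 1/4 + x := by simp [A]
  have hAim : A.im = (t - 2*r) / 2 := by simp [A]
  have hBre : B.re = 1/4 + x := by simp [B]
  have hBim : B.im = t / 2 := by simp [B]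
  have hCre : C.re = 1/2 + x := by simp [C]
  have hCim : C.im = -r := by simp [C]
  have hDre : D.re = 1/2 + x := by simp [D]
  have hDim : D.im = t := by simp [D]
  have hA : ‖A‖ ≤ (x + 1) * (1 + |2*r - t|) := by
    have := norm_le_abs_re_add_abs_im A
    rw [hAre, hAim, abs_of_nonneg (by positivity), abs_div, abs_sub_comm, abs_two] at this
    nlinarith [abs_nonneg (2*r - t)]
  have hB : ‖B‖ ≤ ‖D‖ := by
    rw [norm_eq_sqrt_sq_add_sq, norm_eq_sqrt_sq_add_sq, hBre, hBim, hDre, hDim]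
    apply Real.sqrt_le_sqrt
    nlinarith [sq_nonneg t]
  have hC : (1 + |r|) / 4 ≤ ‖C‖ := by
    have hre := abs_re_le_norm C
    have him := abs_im_le_norm C
    rw [hCre, abs_of_nonneg (by positivity)] at hre
    rw [hCim, abs_neg] at him
    linarith
  have hD : 0 < ‖D‖ := (re_le_norm D).trans_lt' (by rw [hDre]; positivity)
  rw [norm_mul, norm_mul, div_le_iff₀ (mul_pos (hC.trans_lt' (by positivity)) hD)]
  calc ‖A‖ * ‖B‖ ≤ (x + 1) * (1 + |2*r - t|) * ‖D‖ := by gcongr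
    _ = 4 * (x + 1) * ((1 + |2*r - t|) / (1 + |r|)) * ((1 + |r|) / 4 * ‖D‖) := by
      field_simp
    _ ≤ 4 * (x + 1) * ((1 + |2*r - t|) / (1 + |r|)) * (‖C‖ * ‖D‖) := by gcongr

end Complex

/-- (Summand bound in the proof of Lemma `4F3bound`.)
For every `k ∈ ℤ` there exists `C_k > 0` such that for all integers `0 ≤ m ≤ |k|` and all
`r, t ∈ ℝ`,
`|Γ(m + 1/4 + i(t-2r)/2) Γ(m + 1/4 + it/2) Γ(1/2 - ir) Γ(1/2 + it)| /
 |Γ(1/4 + i(t-2r)/2) Γ(1/4 + it/2) Γ(1/2 + m - ir) Γ(1/2 + m + it)|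
  ≤ C_k ((1+|2r-t|)/(1+|r|))^m`. -/
theorem stmt3 (k : ℤ) :
    ∃ C : ℝ, 0 < C ∧ ∀ m : ℕ, m ≤ k.natAbs → ∀ r t : ℝ,
      ‖Complex.Gamma ((m : ℂ) + 1/4 + Complex.I * (t - 2*r) / 2) *
          Complex.Gamma ((m : ℂ) + 1/4 + Complex.I * t / 2) *
          Complex.Gamma (1/2 - Complex.I * r) *
          Complex.Gamma (1/2 + Complex.I * t)‖ /
        ‖Complex.Gamma (1/4 + Complex.I * (t - 2*r) / 2) *
          Complex.Gamma (1/4 + Complex.I * t / 2) *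
          Complex.Gamma (1/2 + (m : ℂ) - Complex.I * r) *
          Complex.Gamma (1/2 + (m : ℂ) + Complex.I * t)‖ ≤
        C * ((1 + |2*r - t|) / (1 + |r|)) ^ m := by
  refine ⟨4 ^ k.natAbs * k.natAbs !, by positivity, fun m hm r t => ?_⟩
  rw [show (m : ℂ) + 1/4 + I * (t - 2*r) / 2 = 1/4 + I * (t - 2*r) / 2 + m by ring,
    show (m : ℂ) + 1/4 + I * t / 2 = 1/4 + I * t / 2 + m by ring,
    show 1/2 + (m : ℂ) - I * r = 1/2 - I * r + m by ring,
    show 1/2 + (m : ℂ) + I * t = 1/2 + I * t + m by ring,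
    norm_Gamma_ratio_eq_prod (ne_neg_natCast_of_re_pos (by simp))
      (ne_neg_natCast_of_re_pos (by simp)) (ne_neg_natCast_of_re_pos (by simp))
      (ne_neg_natCast_of_re_pos (by simp))]
  set X := (1 + |2*r - t|) / (1 + |r|)
  calc _ ≤ ∏ j ∈ range m, (4 * ((j : ℝ) + 1) * X) := by
        refine prod_le_prod (fun _ _ => by positivity) fun j _ => ?_
        simpa only [ofReal_natCast] using norm_pochhammer_factor_ratio_le j r t j.cast_nonneg
    _ = 4 ^ m * m ! * X ^ m := by
        rw [prod_mul_distrib, prod_mul_distrib, prod_const, prod_const, card_range,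
          ← prod_range_add_one_eq_factorial]
        push_cast
        ring
    _ ≤ 4 ^ k.natAbs * k.natAbs ! * X ^ m := by
        gcongr
        norm_num
end

section
/- Let (r_ℓ)_{ℓ∈ℕ} be a sequence of real numbers with r_ℓ ≥ 1 for all ℓ, and suppose there is a constant C > 0 such that #{ℓ ∈ ℕ : T−1 < r_ℓ ≤ T} ≤ C·T for every integer T ≥ 1. Then for every ε with 0 < ε < 1/2 there exists a constant C′ > 0 (depending only on C and ε) such that for all real R ≥ 1: Σ_{ℓ∈ℕ} r_ℓ^{−5/2+ε} · (2R + r_ℓ)^{−1/2} · (1 + |2R − r_ℓ|)^{−1/2} ≤ C′/R (in particular the series converges). -/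
/-!
Group the indices by `T = ⌈r_ℓ⌉`. On the bucket of `T` the summand is at most
`16 T^(-5/2+ε) R^(-1/2) (1 + |2R - T|)^(-1/2)`, and the bucket has at most `C T` elements,
so the series is dominated by `16 C R^(-1/2) Σ_T T^(-3/2+ε) (1 + |2R - T|)^(-1/2)`.
Where `|2R - T| ≥ R` the last factor is at most `R^(-1/2)` and `Σ_T T^(-3/2+ε)` converges;
the remaining `T` lie in `(R, 3R)`, so `T^(-3/2+ε) ≤ 1/R` there, while
`Σ_{T ≤ 3R} (1 + |2R - T|)^(-1/2) = O(√R)`.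
-/

open Real Finset

theorem summable_and_tsum_le_of_fiber_ncard_le {ι κ : Type*} {f : ι → ℝ} {φ : ι → κ}
    {c g : κ → ℝ} (hf : ∀ i, 0 ≤ f i) (hg : ∀ k, 0 ≤ g k) (hfg : ∀ i, f i ≤ g (φ i))
    (hfiber : ∀ k, (φ ⁻¹' {k}).Finite ∧ ((φ ⁻¹' {k}).ncard : ℝ) ≤ c k)
    (hcg : Summable fun k => c k * g k) :
    Summable f ∧ ∑' i, f i ≤ ∑' k, c k * g k := by
  classical
  have hcg0 : ∀ k, 0 ≤ c k * g k := fun k =>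
    mul_nonneg ((Nat.cast_nonneg _).trans (hfiber k).2) (hg k)
  have hpartial : ∀ s : Finset ι, ∑ i ∈ s, f i ≤ ∑' k, c k * g k := by
    intro s
    calc ∑ i ∈ s, f i = ∑ k ∈ s.image φ, ∑ i ∈ s with φ i = k, f i :=
          (sum_fiberwise_of_maps_to (fun i hi => mem_image_of_mem φ hi) f).symm
      _ ≤ ∑ k ∈ s.image φ, c k * g k := by
          gcongr with k
          have hcard : ((s.filter (φ · = k)).card : ℝ) ≤ c k := by
            refine le_trans ?_ (hfiber k).2
            have hsub : ((s.filter (φ · = k) : Finset ι) : Set ι) ⊆ φ ⁻¹' {k} :=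
              fun i hi => (mem_filter.1 hi).2
            rw [← Set.ncard_coe_finset]
            exact_mod_cast Set.ncard_le_ncard hsub (hfiber k).1
          calc ∑ i ∈ s with φ i = k, f i ≤ (s.filter (φ · = k)).card • g k :=
                sum_le_card_nsmul _ _ _ fun i hi => (mem_filter.1 hi).2 ▸ hfg i
            _ ≤ c k * g k := by rw [nsmul_eq_mul]; gcongr; exact hg k
      _ ≤ ∑' k, c k * g k := hcg.sum_le_tsum _ fun k _ => hcg0 k
  exact ⟨summable_of_sum_le hf hpartial, Real.tsum_le_of_sum_le hf hpartial⟩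

lemma natCeil_fiber_finite_and_ncard_le {ι : Type*} {r : ι → ℝ} (hr : ∀ i, 0 < r i) {C : ℝ}
    (hcount : ∀ T : ℕ, 1 ≤ T → {i | (T : ℝ) - 1 < r i ∧ r i ≤ T}.Finite ∧
      (Nat.card {i | (T : ℝ) - 1 < r i ∧ r i ≤ T} : ℝ) ≤ C * T) (T : ℕ) :
    ((fun i => ⌈r i⌉₊) ⁻¹' {T}).Finite ∧ (((fun i => ⌈r i⌉₊) ⁻¹' {T}).ncard : ℝ) ≤ C * T := by
  rcases Nat.eq_zero_or_pos T with rfl | hT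
  · have : (fun i => ⌈r i⌉₊) ⁻¹' {0} = ∅ := by
      ext i; simp [(hr i).not_ge]
    simp [this]
  · have : (fun i => ⌈r i⌉₊) ⁻¹' {T} = {i | (T : ℝ) - 1 < r i ∧ r i ≤ T} := by
      ext i; simp [Nat.ceil_eq_iff hT.ne', Nat.cast_sub hT]
    rw [this]
    exact hcount T hT

lemma rpow_neg_one_half {x : ℝ} (hx : 0 ≤ x) : x ^ (-(1:ℝ) / 2) = (√x)⁻¹ := by
  rw [neg_div, rpow_neg hx, sqrt_eq_rpow, one_div]

lemma inv_sqrt_le_mul_inv_sqrt {a b c : ℝ} (ha : 0 < a) (hb : 0 < b) (hc : 0 ≤ c)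
    (h : b ≤ c ^ 2 * a) : (√a)⁻¹ ≤ c * (√b)⁻¹ := by
  have hsqrt : √b ≤ c * √a := by
    rw [← sqrt_sq hc, ← sqrt_mul (sq_nonneg c)]
    exact sqrt_le_sqrt h
  rw [← div_eq_mul_inv, le_div_iff₀ (sqrt_pos.2 hb), inv_mul_le_iff₀ (sqrt_pos.2 ha), mul_comm]
  exact hsqrt

lemma sum_range_inv_sqrt_le (M : ℕ) : ∑ j ∈ range M, (√(1 + j))⁻¹ ≤ 2 * √M := by
  induction M with
  | zero => simp
  | succ M ih =>
    rw [sum_range_succ, Nat.cast_succ, add_comm 1 (M : ℝ)]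
    have hM : √(M : ℝ) ^ 2 = M := sq_sqrt M.cast_nonneg
    have hM1 : √((M : ℝ) + 1) ^ 2 = M + 1 := sq_sqrt (by positivity)
    have hstep : (√((M : ℝ) + 1))⁻¹ ≤ 2 * √((M : ℝ) + 1) - 2 * √M := by
      rw [inv_le_iff_one_le_mul₀ (sqrt_pos.2 (by positivity))]
      nlinarith [sqrt_nonneg (M : ℝ), sqrt_nonneg ((M : ℝ) + 1),
        sq_nonneg (√(M : ℝ) * √((M : ℝ) + 1) - (M + 1 / 2))]
    linarith

lemma sum_range_inv_sqrt_one_add_abs_sub_le {x : ℝ} (hx : 0 ≤ x) {N : ℕ} (hN : ⌊x⌋₊ ≤ N) :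
    ∑ T ∈ range (N + 1), (√(1 + |x - T|))⁻¹ ≤ 2 * √(4 * N + 2) := by
  set m := ⌊x⌋₊
  -- interleave the distances to the points left and right of `x`
  let k : ℕ → ℕ := fun T => if T ≤ m then 2 * (m - T) else 2 * (T - m) - 1
  have hk : ∀ T : ℕ, (1 + k T : ℝ) ≤ 2 * (1 + |x - T|) := by
    intro T
    by_cases hT : T ≤ m
    · have hmx : (m : ℝ) ≤ x := Nat.floor_le hx
      have : (k T : ℝ) = 2 * ((m : ℝ) - T) := by simp [k, hT, Nat.cast_sub hT]
      rw [this]; linarith [le_abs_self (x - T)]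
    · have hxm : x < m + 1 := Nat.lt_floor_add_one x
      have : (k T : ℝ) = 2 * ((T : ℝ) - m) - 1 := by
        simp only [k, if_neg hT]
        rw [Nat.cast_sub (by omega), Nat.cast_mul, Nat.cast_sub (by omega)]
        push_cast; ring
      rw [this]; linarith [neg_abs_le (x - T)]
  have hinj : Set.InjOn k (range (N + 1)) := by
    intro a _ b _ hab
    simp only [k] at hab
    split_ifs at hab <;> omega
  have hmaps : ∀ T ∈ range (N + 1), k T ∈ range (2 * N + 1) := by
    intro T hT
    simp only [mem_range] at hT ⊢
    simp only [k]
    split_ifs <;> omega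
  calc ∑ T ∈ range (N + 1), (√(1 + |x - T|))⁻¹
      ≤ ∑ T ∈ range (N + 1), √2 * (√(1 + (k T : ℝ)))⁻¹ :=
        sum_le_sum fun T _ => inv_sqrt_le_mul_inv_sqrt (by positivity) (by positivity)
          (sqrt_nonneg 2) (by rw [sq_sqrt zero_le_two]; exact hk T)
    _ = √2 * ∑ j ∈ (range (N + 1)).image k, (√(1 + (j : ℝ)))⁻¹ := by
        rw [sum_image hinj, mul_sum]
    _ ≤ √2 * ∑ j ∈ range (2 * N + 1), (√(1 + (j : ℝ)))⁻¹ := by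
        gcongr
        · intro j hj
          obtain ⟨T, hT, rfl⟩ := mem_image.1 hj
          exact hmaps T hT
    _ ≤ √2 * (2 * √(2 * N + 1)) := by
        gcongr
        exact_mod_cast sum_range_inv_sqrt_le (2 * N + 1)
    _ = 2 * √(4 * N + 2) := by
        rw [mul_left_comm, ← sqrt_mul zero_le_two]; ring_nf

lemma tsum_rpow_mul_inv_sqrt_le {p R : ℝ} (hp : p < -1) (hR : 1 ≤ R) :
    Summable (fun T : ℕ => (T : ℝ) ^ p * (√(1 + |2 * R - T|))⁻¹) ∧
      ∑' T : ℕ, (T : ℝ) ^ p * (√(1 + |2 * R - T|))⁻¹ ≤ (∑' T : ℕ, (T : ℝ) ^ p + 8) / √R := by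
  have hR0 : 0 < R := by linarith
  have hsqrtR : 0 < √R := sqrt_pos.2 hR0
  set w : ℕ → ℝ := fun T => (√(1 + |2 * R - T|))⁻¹
  have hw0 : ∀ T, 0 ≤ w T := fun T => by positivity
  -- only the `T` with `|2R - T| < R` feel the singularity of `w` at `2R`
  set b : ℕ → ℝ := fun T => if |2 * R - T| < R then w T / R else 0
  set N := ⌊3 * R⌋₊
  have hb_supp : ∀ T ∉ range (N + 1), b T = 0 := by
    intro T hT
    have hTN : 3 * R < T := by
      rw [mem_range, not_lt, Nat.succ_le_iff] at hT
      exact (Nat.floor_lt (by positivity)).1 hT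
    have : R ≤ |2 * R - T| := by
      rw [abs_sub_comm]; exact le_trans (by linarith) (le_abs_self _)
    simp only [b, if_neg this.not_gt]
  have hb_sum : ∑' T, b T ≤ 8 / √R := by
    have hN : (N : ℝ) ≤ 3 * R := Nat.floor_le (by positivity)
    have hwindow := sum_range_inv_sqrt_one_add_abs_sub_le (x := 2 * R) (by positivity)
      (N := N) (Nat.floor_le_floor (by linarith))
    have h16 : √(4 * N + 2) ≤ 4 * √R := by
      rw [show (4 : ℝ) * √R = √(4 ^ 2 * R) by rw [sqrt_mul (by positivity), sqrt_sq (by norm_num)]]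
      exact sqrt_le_sqrt (by linarith)
    rw [tsum_eq_sum hb_supp]
    calc ∑ T ∈ range (N + 1), b T ≤ ∑ T ∈ range (N + 1), w T / R := by
          gcongr with T
          simp only [b]
          split_ifs
          · exact le_rfl
          · exact div_nonneg (hw0 T) hR0.le
      _ = (∑ T ∈ range (N + 1), w T) / R := (sum_div ..).symm
      _ ≤ 8 * √R / R := by gcongr; linarith
      _ = 8 / √R := by
          rw [div_eq_div_iff hR0.ne' hsqrtR.ne', mul_assoc, mul_self_sqrt hR0.le]
  have hpoint : ∀ T : ℕ, (T : ℝ) ^ p * w T ≤ (T : ℝ) ^ p / √R + b T := by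
    intro T
    by_cases hT : |2 * R - T| < R
    · have hRT : R ≤ T := by rw [abs_lt] at hT; linarith
      have hTpR : (T : ℝ) ^ p ≤ R⁻¹ := by
        calc (T : ℝ) ^ p ≤ R ^ p := rpow_le_rpow_of_nonpos hR0 hRT (by linarith)
          _ ≤ R ^ (-1 : ℝ) := rpow_le_rpow_of_exponent_le hR hp.le
          _ = R⁻¹ := rpow_neg_one R
      simp only [b, if_pos hT]
      calc (T : ℝ) ^ p * w T ≤ R⁻¹ * w T := by gcongr
        _ = w T / R := by ring
        _ ≤ (T : ℝ) ^ p / √R + w T / R := le_add_of_nonneg_left (by positivity)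
    · have hwR : w T ≤ (√R)⁻¹ := inv_anti₀ hsqrtR (sqrt_le_sqrt (by linarith))
      simp only [b, if_neg hT, add_zero]
      calc (T : ℝ) ^ p * w T ≤ (T : ℝ) ^ p * (√R)⁻¹ := by gcongr
        _ = (T : ℝ) ^ p / √R := by ring
  have hZ := summable_nat_rpow.2 hp
  have hdom : Summable fun T : ℕ => (T : ℝ) ^ p / √R + b T :=
    (hZ.div_const _).add (summable_of_ne_finset_zero hb_supp)
  have hsum : Summable fun T : ℕ => (T : ℝ) ^ p * w T :=
    hdom.of_nonneg_of_le (fun T => mul_nonneg (rpow_nonneg T.cast_nonneg p) (hw0 T)) hpoint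
  refine ⟨hsum, ?_⟩
  calc ∑' T : ℕ, (T : ℝ) ^ p * w T ≤ ∑' T : ℕ, ((T : ℝ) ^ p / √R + b T) :=
        hsum.tsum_le_tsum hpoint hdom
    _ = (∑' T : ℕ, (T : ℝ) ^ p) / √R + ∑' T, b T := by
        rw [(hZ.div_const _).tsum_add (summable_of_ne_finset_zero hb_supp), tsum_div_const]
    _ ≤ (∑' T : ℕ, (T : ℝ) ^ p) / √R + 8 / √R := by gcongr
    _ = (∑' T : ℕ, (T : ℝ) ^ p + 8) / √R := by ring

lemma rpow_le_eight_mul_natCeil_rpow {q r : ℝ} (hq : -3 ≤ q) (hq0 : q ≤ 0) (hr : 1 ≤ r) :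
    r ^ q ≤ 8 * (⌈r⌉₊ : ℝ) ^ q := by
  have hceil : (0 : ℝ) < ⌈r⌉₊ := by exact_mod_cast Nat.ceil_pos.2 (by linarith)
  have hceil2 : (⌈r⌉₊ : ℝ) ≤ 2 * r := by linarith [Nat.ceil_lt_add_one (zero_le_one.trans hr)]
  calc r ^ q = (2 : ℝ) ^ (-q) * (2 * r) ^ q := by
        rw [mul_rpow zero_le_two (by linarith), ← mul_assoc, ← rpow_add zero_lt_two,
          neg_add_cancel, rpow_zero, one_mul]
    _ ≤ (2 : ℝ) ^ (3 : ℝ) * (⌈r⌉₊ : ℝ) ^ q :=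
        mul_le_mul (rpow_le_rpow_of_exponent_le one_le_two (by linarith))
          (rpow_le_rpow_of_nonpos hceil hceil2 hq0) (by positivity) (by positivity)
    _ = 8 * (⌈r⌉₊ : ℝ) ^ q := by norm_num

lemma inv_sqrt_one_add_abs_sub_le {x y z : ℝ} (h : |y - z| ≤ 1) :
    (√(1 + |x - y|))⁻¹ ≤ 2 * (√(1 + |x - z|))⁻¹ :=
  inv_sqrt_le_mul_inv_sqrt (by positivity) (by positivity) zero_le_two
    (by linarith [abs_sub_le x y z, abs_nonneg (x - y)])

lemma summand_le_natCeil {q R r : ℝ} (hq : -3 ≤ q) (hq0 : q ≤ 0) (hR : 0 < R) (hr : 1 ≤ r) :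
    r ^ q * (2 * R + r) ^ (-(1:ℝ) / 2) * (1 + |2 * R - r|) ^ (-(1:ℝ) / 2) ≤
      16 / √R * ((⌈r⌉₊ : ℝ) ^ q * (√(1 + |2 * R - ⌈r⌉₊|))⁻¹) := by
  rw [rpow_neg_one_half (by linarith), rpow_neg_one_half (by positivity)]
  have hceil : |r - ⌈r⌉₊| ≤ 1 := by
    rw [abs_sub_comm, abs_le]
    constructor <;> linarith [Nat.le_ceil r, Nat.ceil_lt_add_one (zero_le_one.trans hr)]
  calc r ^ q * (√(2 * R + r))⁻¹ * (√(1 + |2 * R - r|))⁻¹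
      ≤ (8 * (⌈r⌉₊ : ℝ) ^ q) * (√R)⁻¹ * (2 * (√(1 + |2 * R - ⌈r⌉₊|))⁻¹) := by
        gcongr
        · exact rpow_le_eight_mul_natCeil_rpow hq hq0 hr
        · linarith
        · exact inv_sqrt_one_add_abs_sub_le hceil
    _ = 16 / √R * ((⌈r⌉₊ : ℝ) ^ q * (√(1 + |2 * R - ⌈r⌉₊|))⁻¹) := by ring

/-- (Spectral sum bound via Weyl's law.) Suppose `(r_ℓ)` is a sequence of
reals with `r_ℓ ≥ 1` and `#{ℓ : T-1 < r_ℓ ≤ T} ≤ C T` for every integer `T ≥ 1`. Then for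
every `0 < ε < 1/2` there is `C' > 0`, depending only on `C` and `ε`, such that for all
`R ≥ 1` the series `Σ_ℓ r_ℓ^{-5/2+ε} (2R+r_ℓ)^{-1/2} (1+|2R-r_ℓ|)^{-1/2}` converges and
is at most `C'/R`. -/
theorem stmt9 (C : ℝ) (hC : 0 < C) (ε : ℝ) (hε0 : 0 < ε) (hε : ε < 1/2) :
    ∃ C' : ℝ, 0 < C' ∧ ∀ r : ℕ → ℝ, (∀ l : ℕ, 1 ≤ r l) →
      (∀ T : ℕ, 1 ≤ T →
        {l : ℕ | (T : ℝ) - 1 < r l ∧ r l ≤ (T : ℝ)}.Finite ∧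
        (Nat.card {l : ℕ | (T : ℝ) - 1 < r l ∧ r l ≤ (T : ℝ)} : ℝ) ≤ C * T) →
      ∀ R : ℝ, 1 ≤ R →
        Summable (fun l : ℕ =>
          r l ^ (-(5:ℝ)/2 + ε) * (2*R + r l) ^ (-(1:ℝ)/2) *
            (1 + |2*R - r l|) ^ (-(1:ℝ)/2)) ∧
        (∑' l : ℕ,
          r l ^ (-(5:ℝ)/2 + ε) * (2*R + r l) ^ (-(1:ℝ)/2) *
            (1 + |2*R - r l|) ^ (-(1:ℝ)/2)) ≤ C' / R := by
  set Z := ∑' T : ℕ, (T : ℝ) ^ (-(3:ℝ)/2 + ε)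
  have hZ : 0 ≤ Z := tsum_nonneg fun T => rpow_nonneg T.cast_nonneg _
  refine ⟨16 * C * (Z + 8), by positivity, fun r hr hcount R hR => ?_⟩
  have hR0 : 0 < R := by linarith
  set w : ℕ → ℝ := fun T => (√(1 + |2 * R - T|))⁻¹
  obtain ⟨hsum, hle⟩ := tsum_rpow_mul_inv_sqrt_le (p := -(3:ℝ)/2 + ε) (by linarith) hR
  have hweight : ∀ T : ℕ, C * T * (16 / √R * ((T : ℝ) ^ (-(5:ℝ)/2 + ε) * w T)) =
      16 * C / √R * ((T : ℝ) ^ (-(3:ℝ)/2 + ε) * w T) := fun T => by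
    rw [show -(3:ℝ)/2 + ε = (-(5:ℝ)/2 + ε) + 1 by ring, rpow_add_one' T.cast_nonneg (by linarith)]
    ring
  obtain ⟨hf, hfle⟩ := summable_and_tsum_le_of_fiber_ncard_le (φ := fun l => ⌈r l⌉₊)
    (c := fun T : ℕ => C * T) (g := fun T : ℕ => 16 / √R * ((T : ℝ) ^ (-(5:ℝ)/2 + ε) * w T))
    (fun l => by have := hr l; positivity) (fun T => by positivity)
    (fun l => summand_le_natCeil (by linarith) (by linarith) hR0 (hr l))
    (natCeil_fiber_finite_and_ncard_le (fun l => by linarith [hr l]) hcount)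
    (by simp_rw [hweight]; exact hsum.mul_left _)
  refine ⟨hf, hfle.trans ?_⟩
  simp_rw [hweight]
  rw [tsum_mul_left]
  calc 16 * C / √R * ∑' T : ℕ, (T : ℝ) ^ (-(3:ℝ)/2 + ε) * w T ≤ 16 * C / √R * ((Z + 8) / √R) := by
        gcongr
    _ = 16 * C * (Z + 8) / R := by
        rw [div_mul_div_comm, mul_self_sqrt hR0.le]
end

section
/- For every ε with 0 < ε < 1/2 there exists a constant C > 0 such that for all real R ≥ 1: ∫_ℝ (1+|t|)^{−5/2+ε} · (2R+|t|)^{−1/2} · (1 + |2R − |t||)^{−1/2} dt ≤ C/R. -/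
open MeasureTheory Real

/-!
The kernel `(2R+|t|)^{-1/2} (1+|2R-|t||)^{-1/2}` is at most `1/R` where `|t| ≤ R`, since both
bases are then at least `R`, and at most `1` everywhere. Where `|t| > R` the missing factor `1/R`
is paid by one power of `1+|t|`, so the integrand is at most `R⁻¹ (1+|t|)^{-3/2+ε}`, which is
integrable exactly because `ε < 1/2`.
-/

lemma integrable_one_add_abs_rpow {s : ℝ} (hs : s < -1) :
    Integrable (fun t : ℝ => (1 + |t|) ^ s) := by
  have := integrable_one_add_norm (E := ℝ) (μ := volume) (r := -s) (by simp; linarith)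
  simpa [Real.norm_eq_abs] using this

section Kernel

variable {R : ℝ} (t : ℝ)

lemma kernel_le_inv (hR : 0 < R) (ht : |t| ≤ R) :
    (2*R + |t|) ^ (-(1:ℝ)/2) * (1 + abs (2*R - |t|)) ^ (-(1:ℝ)/2) ≤ R⁻¹ :=
  calc (2*R + |t|) ^ (-(1:ℝ)/2) * (1 + abs (2*R - |t|)) ^ (-(1:ℝ)/2)
      ≤ R ^ (-(1:ℝ)/2) * R ^ (-(1:ℝ)/2) := by
        gcongr ?_ * ?_
        · exact rpow_le_rpow_of_nonpos hR (by linarith [abs_nonneg t]) (by norm_num)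
        · exact rpow_le_rpow_of_nonpos hR
            (by linarith [le_abs_self (2*R - |t|)]) (by norm_num)
    _ = R⁻¹ := by rw [← rpow_add hR]; norm_num [rpow_neg_one]

lemma kernel_le_one (hR : 1/2 ≤ R) :
    (2*R + |t|) ^ (-(1:ℝ)/2) * (1 + abs (2*R - |t|)) ^ (-(1:ℝ)/2) ≤ 1 :=
  mul_le_one₀
    (rpow_le_one_of_one_le_of_nonpos (by linarith [abs_nonneg t]) (by norm_num))
    (by positivity)
    (rpow_le_one_of_one_le_of_nonpos (by linarith [abs_nonneg (2*R - |t|)]) (by norm_num))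

lemma one_add_abs_rpow_sub_one_mul_kernel_le (hR : 1/2 ≤ R) (s : ℝ) :
    (1 + |t|) ^ (s - 1) * ((2*R + |t|) ^ (-(1:ℝ)/2) * (1 + abs (2*R - |t|)) ^ (-(1:ℝ)/2))
      ≤ R⁻¹ * (1 + |t|) ^ s := by
  have hR0 : 0 < R := by linarith
  have h1t : 0 < 1 + |t| := by positivity
  rcases le_or_gt |t| R with ht | ht
  · calc _ ≤ (1 + |t|) ^ s * R⁻¹ :=
          mul_le_mul (rpow_le_rpow_of_exponent_le (by linarith [abs_nonneg t]) (by linarith))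
            (kernel_le_inv t hR0 ht) (by positivity) (by positivity)
      _ = R⁻¹ * (1 + |t|) ^ s := mul_comm _ _
  · calc _ ≤ (1 + |t|) ^ (s - 1) * 1 := by gcongr; exact kernel_le_one t hR
      _ = (1 + |t|)⁻¹ * (1 + |t|) ^ s := by
          rw [mul_one, rpow_sub_one h1t.ne', div_eq_inv_mul]
      _ ≤ R⁻¹ * (1 + |t|) ^ s := by gcongr; linarith

end Kernel

theorem stmt10_general (ε : ℝ) (hε : ε < 1/2) :
    ∃ C : ℝ, 0 < C ∧ ∀ R : ℝ, 1 ≤ R →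
      Integrable (fun t : ℝ =>
        (1 + |t|) ^ (-(5:ℝ)/2 + ε) * (2*R + |t|) ^ (-(1:ℝ)/2) *
          (1 + abs (2*R - |t|)) ^ (-(1:ℝ)/2)) ∧
      (∫ t : ℝ,
        (1 + |t|) ^ (-(5:ℝ)/2 + ε) * (2*R + |t|) ^ (-(1:ℝ)/2) *
          (1 + abs (2*R - |t|)) ^ (-(1:ℝ)/2)) ≤ C / R := by
  have hg := integrable_one_add_abs_rpow (s := -(3:ℝ)/2 + ε) (by linarith)
  set I := ∫ t : ℝ, (1 + |t|) ^ (-(3:ℝ)/2 + ε)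
  have hI : 0 ≤ I := integral_nonneg fun t => by positivity
  refine ⟨I + 1, by linarith, fun R hR => ?_⟩
  have hbound : ∀ t : ℝ, (1 + |t|) ^ (-(5:ℝ)/2 + ε) * (2*R + |t|) ^ (-(1:ℝ)/2) *
      (1 + abs (2*R - |t|)) ^ (-(1:ℝ)/2) ≤ R⁻¹ * (1 + |t|) ^ (-(3:ℝ)/2 + ε) := fun t => by
    have := one_add_abs_rpow_sub_one_mul_kernel_le t (R := R) (by linarith) (-(3:ℝ)/2 + ε)
    rwa [← mul_assoc, show -(3:ℝ)/2 + ε - 1 = -(5:ℝ)/2 + ε by ring] at this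
  have hf : Integrable (fun t : ℝ => (1 + |t|) ^ (-(5:ℝ)/2 + ε) * (2*R + |t|) ^ (-(1:ℝ)/2) *
      (1 + abs (2*R - |t|)) ^ (-(1:ℝ)/2)) :=
    (hg.const_mul R⁻¹).mono' (by fun_prop) <| ae_of_all _ fun t => by
      rw [norm_of_nonneg (by positivity)]; exact hbound t
  refine ⟨hf, ?_⟩
  calc _ ≤ ∫ t : ℝ, R⁻¹ * (1 + |t|) ^ (-(3:ℝ)/2 + ε) := integral_mono hf (hg.const_mul _) hbound
    _ = R⁻¹ * I := integral_const_mul _ _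
    _ ≤ (I + 1) / R := by rw [div_eq_inv_mul]; gcongr; linarith

/-- (Archimedean integral bound.) For every `0 < ε < 1/2` there is `C > 0`
such that for all `R ≥ 1`,
`∫_ℝ (1+|t|)^{-5/2+ε} (2R+|t|)^{-1/2} (1+|2R-|t||)^{-1/2} dt ≤ C/R`. -/
theorem stmt10 (ε : ℝ) (hε0 : 0 < ε) (hε : ε < 1/2) :
    ∃ C : ℝ, 0 < C ∧ ∀ R : ℝ, 1 ≤ R →
      Integrable (fun t : ℝ =>
        (1 + |t|) ^ (-(5:ℝ)/2 + ε) * (2*R + |t|) ^ (-(1:ℝ)/2) *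
          (1 + abs (2*R - |t|)) ^ (-(1:ℝ)/2)) ∧
      (∫ t : ℝ,
        (1 + |t|) ^ (-(5:ℝ)/2 + ε) * (2*R + |t|) ^ (-(1:ℝ)/2) *
          (1 + abs (2*R - |t|)) ^ (-(1:ℝ)/2)) ≤ C / R :=
  stmt10_general ε hε
end

section
/- Let λ : ℕ₊ → ℂ satisfy the Hecke relations, and suppose there exist A > 0 and θ ≥ 0 with |λ(n)| ≤ A·n^θ for all n ≥ 1. Then for every t ∈ ℝ and every s ∈ ℂ with Re(s) > 1 + θ, the series Σ_{n≥1} n^{−2s}, Σ_{n≥1} λ(n)·λ(n,t)·n^{−s}, Σ_{n≥1} λ(n)·n^{−(s+it)}, and Σ_{n≥1} λ(n)·n^{−(s−it)} all converge absolutely, and (Σ_{n≥1} n^{−2s}) · (Σ_{n≥1} λ(n)·λ(n,t)·n^{−s}) = (Σ_{n≥1} λ(n)·n^{−(s+it)}) · (Σ_{n≥1} λ(n)·n^{−(s−it)}). -/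
/-!
Write `g₊(n) = λ(n) n^{it}` and `g₋(n) = λ(n) n^{-it}`. By the Hecke relations,
`(g₊ ⍟ g₋)(n) = Σ_{ab = n} Σ_{d ∣ (a, b)} λ(ab/d²) (a/d)^{it} (b/d)^{-it}`, and the substitution
`a = du`, `b = dv` turns this into `Σ_{d²e = n} λ(e) λ(e, t)`, the Dirichlet convolution of the
indicator of the squares with `λ(·) λ(·, t)`. Since L-series of absolutely convergent Dirichlet
series multiply under convolution, and the L-series of the indicator of the squares at `s` is
`ζ(2s)`, the identity follows. Absolute convergence comes from `|λ(n)| ≤ A n^θ` together with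
`|λ(n, t)| ≤ d(n)`, where `d(n) n^θ` is the convolution of `n^θ` with itself.
-/

/-- `λ(n,t) = Σ_{ab=n} a^{it} b^{-it}`. -/
noncomputable def lamT (n : ℕ) (t : ℝ) : ℂ :=
  ∑ a ∈ n.divisors, ((a : ℂ) ^ (Complex.I * t)) * (((n / a : ℕ) : ℂ) ^ (-(Complex.I * t)))

open Complex LSeries
open scoped LSeries.notation

lemma LSeries.term_succ (g : ℕ → ℂ) (s : ℂ) (n : ℕ) :
    term g s (n + 1) = g (n + 1) * ((n + 1 : ℕ) : ℂ) ^ (-s) := by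
  rw [term_of_ne_zero n.succ_ne_zero, cpow_neg, div_eq_mul_inv]

lemma LSeriesSummable.summable_norm_succ_mul_cpow_neg {g : ℕ → ℂ} {s : ℂ}
    (h : LSeriesSummable g s) :
    Summable fun n : ℕ => ‖g (n + 1) * ((n + 1 : ℕ) : ℂ) ^ (-s)‖ := by
  simpa only [term_succ] using (summable_nat_add_iff 1).mpr h.norm

lemma tsum_succ_mul_cpow_neg_eq_LSeries (g : ℕ → ℂ) (s : ℂ) :
    ∑' n : ℕ, g (n + 1) * ((n + 1 : ℕ) : ℂ) ^ (-s) = LSeries g s := by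
  simp only [← term_succ, LSeries]
  refine Nat.succ_injective.tsum_eq fun n hn => ⟨n - 1, ?_⟩
  have : n ≠ 0 := by rintro rfl; exact hn (term_zero ..)
  simp only [Nat.succ_eq_add_one]
  omega

lemma LSeries.term_mul_natCast_cpow (g : ℕ → ℂ) (s w : ℂ) (n : ℕ) :
    term (fun n => g n * (n : ℂ) ^ w) s n = term g (s - w) n := by
  rcases eq_or_ne n 0 with rfl | hn
  · simp
  have hn' : (n : ℂ) ≠ 0 := Nat.cast_ne_zero.mpr hn
  rw [term_of_ne_zero hn, term_of_ne_zero hn, cpow_sub _ _ hn', div_div_eq_mul_div]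

lemma LSeries_mul_natCast_cpow (g : ℕ → ℂ) (s w : ℂ) :
    LSeries (fun n => g n * (n : ℂ) ^ w) s = LSeries g (s - w) := by
  simp only [LSeries, term_mul_natCast_cpow]

lemma LSeriesSummable_mul_natCast_cpow_iff {g : ℕ → ℂ} {s w : ℂ} :
    LSeriesSummable (fun n => g n * (n : ℂ) ^ w) s ↔ LSeriesSummable g (s - w) := by
  rw [LSeriesSummable, funext (term_mul_natCast_cpow g s w), LSeriesSummable]

lemma LSeriesSummable_of_norm_le_mul_rpow {g : ℕ → ℂ} {A θ : ℝ} {s : ℂ}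
    (hg : ∀ n ≠ 0, ‖g n‖ ≤ A * (n : ℝ) ^ θ) (hs : θ + 1 < s.re) : LSeriesSummable g s :=
  LSeriesSummable_of_le_const_mul_rpow hs ⟨A, by simpa only [add_sub_cancel_right] using hg⟩

noncomputable def sqDilation (g : ℕ → ℂ) (n : ℕ) : ℂ :=
  if IsSquare n then g n.sqrt else 0

lemma term_sqDilation_sq (g : ℕ → ℂ) (s : ℂ) (n : ℕ) :
    term (sqDilation g) s (n ^ 2) = term g (2 * s) n := by
  rcases eq_or_ne n 0 with rfl | hn
  · simp
  rw [term_of_ne_zero (pow_ne_zero 2 hn), term_of_ne_zero hn, sqDilation,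
    if_pos (IsSquare.sq n), Nat.sqrt_eq', Nat.cast_pow, ← natCast_cpow_natCast_mul, Nat.cast_ofNat]

lemma support_term_sqDilation_subset (g : ℕ → ℂ) (s : ℂ) :
    Function.support (term (sqDilation g) s) ⊆ Set.range (· ^ 2) := by
  intro n hn
  by_contra hsq
  have hsq' : ¬IsSquare n := fun ⟨r, hr⟩ => hsq ⟨r, by rw [hr, ← sq]⟩
  rcases eq_or_ne n 0 with rfl | hn0
  · exact hn (term_zero ..)
  · exact hn (by rw [term_of_ne_zero hn0, sqDilation, if_neg hsq', zero_div])

lemma LSeries_sqDilation (g : ℕ → ℂ) (s : ℂ) : LSeries (sqDilation g) s = LSeries g (2 * s) := by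
  rw [LSeries, LSeries, ← (Nat.pow_left_injective two_ne_zero).tsum_eq
    (support_term_sqDilation_subset g s)]
  simp only [term_sqDilation_sq]

lemma LSeriesSummable_sqDilation_iff {g : ℕ → ℂ} {s : ℂ} :
    LSeriesSummable (sqDilation g) s ↔ LSeriesSummable g (2 * s) := by
  rw [LSeriesSummable, LSeriesSummable, ← (Nat.pow_left_injective two_ne_zero).summable_iff
    fun n hn => Function.notMem_support.mp fun h => hn (support_term_sqDilation_subset g s h)]
  simp only [Function.comp_def, term_sqDilation_sq]

-- The bijection is `((a, b), d) ↦ ((d², uv), (u, v))` with `a = du`, `b = dv`.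
theorem Nat.sum_divisorsAntidiagonal_sum_divisors_gcd {M : Type*} [AddCommMonoid M] (n : ℕ)
    (G : ℕ → ℕ → M) :
    ∑ p ∈ n.divisorsAntidiagonal, ∑ d ∈ (p.1.gcd p.2).divisors, G (p.1 / d) (p.2 / d) =
      ∑ p ∈ n.divisorsAntidiagonal with IsSquare p.1,
        ∑ q ∈ p.2.divisorsAntidiagonal, G q.1 q.2 := by
  rw [Finset.sum_sigma', Finset.sum_sigma']
  refine Finset.sum_nbij'
    (fun x => ⟨(x.2 * x.2, x.1.1 / x.2 * (x.1.2 / x.2)), (x.1.1 / x.2, x.1.2 / x.2)⟩)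
    (fun y => ⟨(y.1.1.sqrt * y.2.1, y.1.1.sqrt * y.2.2), y.1.1.sqrt⟩) ?_ ?_ ?_ ?_
    (fun _ _ => rfl)
  · rintro ⟨⟨a, b⟩, d⟩ h
    simp only [Finset.mem_sigma, Nat.mem_divisorsAntidiagonal, Nat.mem_divisors] at h
    obtain ⟨⟨rfl, hn⟩, hd, -⟩ := h
    obtain ⟨a, rfl⟩ := hd.trans (Nat.gcd_dvd_left _ _)
    obtain ⟨b, rfl⟩ := hd.trans (Nat.gcd_dvd_right _ _)
    have hd0 : d ≠ 0 := by rintro rfl; simp at hn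
    simp only [Finset.mem_sigma, Finset.mem_filter, Nat.mem_divisorsAntidiagonal,
      Nat.mul_div_cancel_left _ (Nat.pos_of_ne_zero hd0)]
    refine ⟨⟨⟨by ring, hn⟩, d, rfl⟩, trivial, ?_⟩
    exact right_ne_zero_of_mul (by rwa [mul_mul_mul_comm] at hn)
  · rintro ⟨⟨_, e⟩, u, v⟩ h
    simp only [Finset.mem_sigma, Finset.mem_filter, Nat.mem_divisorsAntidiagonal] at h
    obtain ⟨⟨⟨rfl, hn⟩, d, rfl⟩, rfl, -⟩ := h
    simp only [Nat.sqrt_eq, Finset.mem_sigma, Nat.mem_divisorsAntidiagonal, Nat.mem_divisors,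
      Nat.gcd_mul_left]
    refine ⟨⟨by ring, hn⟩, dvd_mul_right _ _, ?_⟩
    simp_all [Nat.gcd_eq_zero_iff]
  · rintro ⟨⟨a, b⟩, d⟩ h
    simp only [Finset.mem_sigma, Nat.mem_divisorsAntidiagonal, Nat.mem_divisors] at h
    obtain ⟨⟨rfl, hn⟩, hd, -⟩ := h
    obtain ⟨a, rfl⟩ := hd.trans (Nat.gcd_dvd_left _ _)
    obtain ⟨b, rfl⟩ := hd.trans (Nat.gcd_dvd_right _ _)
    have hd0 : d ≠ 0 := by rintro rfl; simp at hn
    simp [hd0, Nat.sqrt_eq]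
  · rintro ⟨⟨_, e⟩, u, v⟩ h
    simp only [Finset.mem_sigma, Finset.mem_filter, Nat.mem_divisorsAntidiagonal] at h
    obtain ⟨⟨⟨rfl, hn⟩, d, rfl⟩, rfl, -⟩ := h
    have hd0 : d ≠ 0 := by rintro rfl; simp at hn
    simp [hd0, Nat.sqrt_eq]

lemma lamT_eq_sum_divisorsAntidiagonal (n : ℕ) (t : ℝ) :
    lamT n t = ∑ p ∈ n.divisorsAntidiagonal, (p.1 : ℂ) ^ (I * t) * (p.2 : ℂ) ^ (-(I * t)) :=
  (Nat.sum_divisorsAntidiagonal fun a b => (a : ℂ) ^ (I * t) * (b : ℂ) ^ (-(I * t))).symm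

lemma norm_lamT_le (n : ℕ) (t : ℝ) : ‖lamT n t‖ ≤ n.divisors.card := by
  refine (norm_sum_le _ _).trans ((Finset.sum_le_card_nsmul _ _ 1 fun a ha => ?_).trans (by simp))
  have ha0 := Nat.pos_of_mem_divisors ha
  have hna : 0 < n / a := Nat.div_pos (Nat.divisor_le ha) ha0
  simp [norm_natCast_cpow_of_pos ha0, norm_natCast_cpow_of_pos hna]

lemma natCast_mul_cpow_mul_natCast_mul_cpow_neg {d : ℕ} (hd : d ≠ 0) (u v : ℕ) (z : ℂ) :
    ((d * u : ℕ) : ℂ) ^ z * ((d * v : ℕ) : ℂ) ^ (-z) = (u : ℂ) ^ z * (v : ℂ) ^ (-z) := by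
  have hd' : (d : ℂ) ^ z ≠ 0 := by simp [hd]
  rw [Nat.cast_mul, Nat.cast_mul, natCast_mul_natCast_cpow, natCast_mul_natCast_cpow, cpow_neg,
    cpow_neg]
  field_simp

lemma convolution_rpow_self_apply (θ : ℝ) (n : ℕ) :
    ((fun n : ℕ => (((n : ℝ) ^ θ : ℝ) : ℂ)) ⍟ (fun n : ℕ => (((n : ℝ) ^ θ : ℝ) : ℂ))) n =
      ((n.divisors.card * (n : ℝ) ^ θ : ℝ) : ℂ) := by
  simp only [convolution_def]
  rw [Nat.sum_divisorsAntidiagonal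
      (f := fun a b => (((a : ℝ) ^ θ : ℝ) : ℂ) * (((b : ℝ) ^ θ : ℝ) : ℂ)),
    Finset.sum_congr rfl (g := fun _ => (((n : ℝ) ^ θ : ℝ) : ℂ)), Finset.sum_const, nsmul_eq_mul]
  · push_cast; rfl
  intro a ha
  rw [← ofReal_mul, ← Real.mul_rpow (by positivity) (by positivity), ← Nat.cast_mul,
    Nat.mul_div_cancel' (Nat.dvd_of_mem_divisors ha)]

lemma LSeriesSummable_mul_lamT {g : ℕ → ℂ} {A θ : ℝ} {s : ℂ}
    (hg : ∀ n ≠ 0, ‖g n‖ ≤ A * (n : ℝ) ^ θ) (hs : θ + 1 < s.re) (t : ℝ) :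
    LSeriesSummable (fun n => g n * lamT n t) s := by
  set u : ℕ → ℂ := fun n => (((n : ℝ) ^ θ : ℝ) : ℂ)
  have hu : LSeriesSummable u s := LSeriesSummable_of_norm_le_mul_rpow (A := 1)
    (fun n _ => by simp [u, abs_of_nonneg (Real.rpow_nonneg n.cast_nonneg θ)]) hs
  refine .of_norm_bounded ((hu.convolution hu).smul (A : ℂ)).norm fun n => norm_term_le s ?_
  rcases eq_or_ne n 0 with rfl | hn
  · simp [lamT]
  calc ‖g n * lamT n t‖ = ‖g n‖ * ‖lamT n t‖ := norm_mul ..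
    _ ≤ A * (n : ℝ) ^ θ * n.divisors.card :=
      mul_le_mul (hg n hn) (norm_lamT_le n t) (norm_nonneg _) ((norm_nonneg _).trans (hg n hn))
    _ ≤ |A * (n.divisors.card * (n : ℝ) ^ θ)| := by
      rw [mul_right_comm, mul_assoc]
      exact le_abs_self _
    _ = ‖((A : ℂ) • (u ⍟ u)) n‖ := by
      rw [Pi.smul_apply, convolution_rpow_self_apply, smul_eq_mul, ← ofReal_mul, norm_real,
        Real.norm_eq_abs]

lemma hecke_mul_natCast_cpow {f : ℕ → ℂ}
    (hHecke : ∀ m n : ℕ, 0 < m → 0 < n →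
      f m * f n = ∑ d ∈ (Nat.gcd m n).divisors, f (m * n / d ^ 2))
    (z : ℂ) {a b : ℕ} (ha : 0 < a) (hb : 0 < b) :
    f a * (a : ℂ) ^ z * (f b * (b : ℂ) ^ (-z)) =
      ∑ d ∈ (a.gcd b).divisors,
        f (a / d * (b / d)) * (((a / d : ℕ) : ℂ) ^ z * ((b / d : ℕ) : ℂ) ^ (-z)) := by
  rw [mul_mul_mul_comm, hHecke a b ha hb, Finset.sum_mul]
  refine Finset.sum_congr rfl fun d hd => ?_
  have hd0 : 0 < d := Nat.pos_of_mem_divisors hd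
  obtain ⟨a, rfl⟩ := (Nat.dvd_of_mem_divisors hd).trans (Nat.gcd_dvd_left _ _)
  obtain ⟨b, rfl⟩ := (Nat.dvd_of_mem_divisors hd).trans (Nat.gcd_dvd_right _ _)
  rw [natCast_mul_cpow_mul_natCast_mul_cpow_neg hd0.ne', Nat.mul_div_cancel_left _ hd0,
    Nat.mul_div_cancel_left _ hd0, show d * a * (d * b) = d ^ 2 * (a * b) by ring,
    Nat.mul_div_cancel_left _ (pow_pos hd0 2)]

lemma mul_natCast_cpow_convolution_eq_sqDilation_convolution {f : ℕ → ℂ}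
    (hHecke : ∀ m n : ℕ, 0 < m → 0 < n →
      f m * f n = ∑ d ∈ (Nat.gcd m n).divisors, f (m * n / d ^ 2)) (t : ℝ) :
    (fun n => f n * (n : ℂ) ^ (I * t)) ⍟ (fun n => f n * (n : ℂ) ^ (-(I * t))) =
      sqDilation 1 ⍟ fun n => f n * lamT n t := by
  set G : ℕ → ℕ → ℂ := fun u v => f (u * v) * ((u : ℂ) ^ (I * t) * (v : ℂ) ^ (-(I * t)))
  funext n
  simp only [convolution_def]
  calc _ = ∑ p ∈ n.divisorsAntidiagonal, ∑ d ∈ (p.1.gcd p.2).divisors, G (p.1 / d) (p.2 / d) :=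
        Finset.sum_congr rfl fun p hp => hecke_mul_natCast_cpow hHecke _
          (Nat.pos_of_ne_zero (Nat.ne_zero_of_mem_divisorsAntidiagonal hp).1)
          (Nat.pos_of_ne_zero (Nat.ne_zero_of_mem_divisorsAntidiagonal hp).2)
    _ = ∑ p ∈ n.divisorsAntidiagonal with IsSquare p.1,
          ∑ q ∈ p.2.divisorsAntidiagonal, G q.1 q.2 :=
        Nat.sum_divisorsAntidiagonal_sum_divisors_gcd n G
    _ = _ := by
      rw [Finset.sum_filter]
      refine Finset.sum_congr rfl fun p _ => ?_
      rw [sqDilation, lamT_eq_sum_divisorsAntidiagonal, Finset.mul_sum]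
      split_ifs
      · rw [Pi.one_apply, one_mul]
        refine Finset.sum_congr rfl fun q hq => ?_
        rw [← (Nat.mem_divisorsAntidiagonal.mp hq).1]
      · rw [zero_mul]

theorem stmt12_general (f : ℕ → ℂ)
    (hHecke : ∀ m n : ℕ, 0 < m → 0 < n →
      f m * f n = ∑ d ∈ (Nat.gcd m n).divisors, f (m * n / d ^ 2))
    (A θ : ℝ) (hθ : 0 ≤ θ)
    (hbound : ∀ n : ℕ, 1 ≤ n → ‖f n‖ ≤ A * (n : ℝ) ^ θ)
    (t : ℝ) (s : ℂ) (hs : 1 + θ < s.re) :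
    Summable (fun n : ℕ => ‖((n + 1 : ℕ) : ℂ) ^ (-(2 * s))‖) ∧
    Summable (fun n : ℕ => ‖f (n + 1) * lamT (n + 1) t * ((n + 1 : ℕ) : ℂ) ^ (-s)‖) ∧
    Summable (fun n : ℕ => ‖f (n + 1) * ((n + 1 : ℕ) : ℂ) ^ (-(s + Complex.I * t))‖) ∧
    Summable (fun n : ℕ => ‖f (n + 1) * ((n + 1 : ℕ) : ℂ) ^ (-(s - Complex.I * t))‖) ∧
    (∑' n : ℕ, ((n + 1 : ℕ) : ℂ) ^ (-(2 * s))) *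
        (∑' n : ℕ, f (n + 1) * lamT (n + 1) t * ((n + 1 : ℕ) : ℂ) ^ (-s)) =
      (∑' n : ℕ, f (n + 1) * ((n + 1 : ℕ) : ℂ) ^ (-(s + Complex.I * t))) *
        (∑' n : ℕ, f (n + 1) * ((n + 1 : ℕ) : ℂ) ^ (-(s - Complex.I * t))) := by
  have hbound' : ∀ n ≠ 0, ‖f n‖ ≤ A * (n : ℝ) ^ θ :=
    fun n hn => hbound n (Nat.one_le_iff_ne_zero.mpr hn)
  have hζ : LSeriesSummable 1 (2 * s) := LSeriesSummable_one_iff.mpr <| by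
    simp only [mul_re, re_ofNat, im_ofNat, zero_mul, sub_zero]
    linarith
  have hlam := LSeriesSummable_mul_lamT hbound' (by linarith) t
  have hf (w : ℂ) (hw : w.re = s.re) : LSeriesSummable f w :=
    LSeriesSummable_of_norm_le_mul_rpow hbound' (by linarith)
  have hf_sub := hf (s - I * t) (by simp)
  have hf_add := hf (s + I * t) (by simp)
  refine ⟨by simpa using hζ.summable_norm_succ_mul_cpow_neg, hlam.summable_norm_succ_mul_cpow_neg,
    hf_add.summable_norm_succ_mul_cpow_neg, hf_sub.summable_norm_succ_mul_cpow_neg, ?_⟩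
  have hζ' := tsum_succ_mul_cpow_neg_eq_LSeries 1 (2 * s)
  simp only [Pi.one_apply, one_mul] at hζ'
  rw [hζ', tsum_succ_mul_cpow_neg_eq_LSeries (fun n => f n * lamT n t),
    tsum_succ_mul_cpow_neg_eq_LSeries, tsum_succ_mul_cpow_neg_eq_LSeries, mul_comm (LSeries f _)]
  calc LSeries 1 (2 * s) * LSeries (fun n => f n * lamT n t) s
      = LSeries (sqDilation 1 ⍟ fun n => f n * lamT n t) s := by
        rw [LSeries_convolution' (LSeriesSummable_sqDilation_iff.mpr hζ) hlam, LSeries_sqDilation]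
    _ = LSeries ((fun n => f n * (n : ℂ) ^ (I * t)) ⍟ (fun n => f n * (n : ℂ) ^ (-(I * t)))) s := by
        rw [mul_natCast_cpow_convolution_eq_sqDilation_convolution hHecke]
    _ = LSeries f (s - I * t) * LSeries f (s + I * t) := by
        rw [LSeries_convolution' (LSeriesSummable_mul_natCast_cpow_iff.mpr hf_sub)
          (LSeriesSummable_mul_natCast_cpow_iff.mpr (by rwa [sub_neg_eq_add])),
          LSeries_mul_natCast_cpow, LSeries_mul_natCast_cpow, sub_neg_eq_add]

/-- (The Dirichlet series identity \eqref{eqn:Dirserieslambdalambdat}.)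
If `λ : ℕ₊ → ℂ` satisfies the Hecke relations and `|λ(n)| ≤ A n^θ`, then for `t ∈ ℝ` and
`Re(s) > 1 + θ` all four series converge absolutely and
`(Σ n^{-2s})(Σ λ(n) λ(n,t) n^{-s}) = (Σ λ(n) n^{-(s+it)})(Σ λ(n) n^{-(s-it)})`. -/
theorem stmt12 (f : ℕ → ℂ) (hf1 : f 1 = 1)
    (hHecke : ∀ m n : ℕ, 0 < m → 0 < n →
      f m * f n = ∑ d ∈ (Nat.gcd m n).divisors, f (m * n / d ^ 2))
    (A θ : ℝ) (hA : 0 < A) (hθ : 0 ≤ θ)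
    (hbound : ∀ n : ℕ, 1 ≤ n → ‖f n‖ ≤ A * (n : ℝ) ^ θ)
    (t : ℝ) (s : ℂ) (hs : 1 + θ < s.re) :
    Summable (fun n : ℕ => ‖((n + 1 : ℕ) : ℂ) ^ (-(2 * s))‖) ∧
    Summable (fun n : ℕ => ‖f (n + 1) * lamT (n + 1) t * ((n + 1 : ℕ) : ℂ) ^ (-s)‖) ∧
    Summable (fun n : ℕ => ‖f (n + 1) * ((n + 1 : ℕ) : ℂ) ^ (-(s + Complex.I * t))‖) ∧
    Summable (fun n : ℕ => ‖f (n + 1) * ((n + 1 : ℕ) : ℂ) ^ (-(s - Complex.I * t))‖) ∧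
    (∑' n : ℕ, ((n + 1 : ℕ) : ℂ) ^ (-(2 * s))) *
        (∑' n : ℕ, f (n + 1) * lamT (n + 1) t * ((n + 1 : ℕ) : ℂ) ^ (-s)) =
      (∑' n : ℕ, f (n + 1) * ((n + 1 : ℕ) : ℂ) ^ (-(s + Complex.I * t))) *
        (∑' n : ℕ, f (n + 1) * ((n + 1 : ℕ) : ℂ) ^ (-(s - Complex.I * t))) :=
  stmt12_general f hHecke A θ hθ hbound t s hs
end

section
/- Let λ : ℕ₊ → ℂ satisfy the Hecke relations, and suppose there exist A > 0 and θ ≥ 0 with |λ(n)| ≤ A·n^θ for all n ≥ 1. Then for every s ∈ ℂ with Re(s) > 1 + 2θ, the series Σ_{n≥1} λ(n)²·n^{−s}, Σ_{n≥1} n^{−s}, and Σ_{n≥1} λ(n²)·n^{−s} converge absolutely, and Σ_{n≥1} λ(n)²·n^{−s} = (Σ_{n≥1} n^{−s}) · (Σ_{n≥1} λ(n²)·n^{−s}). -/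
/-!
The Hecke relation with `m = n` reads `λ(n)² = Σ_{d ∣ n} λ((n/d)²)`, i.e. `λ²` is the
Dirichlet convolution of the constant sequence `1` with `n ↦ λ(n²)`. The bound
`|λ(n)| ≤ A n^θ` gives `|λ(n)²|, |λ(n²)| = O(n^{2θ})`, so all three L-series converge
absolutely for `Re s > 1 + 2θ`, and the L-series of a convolution is the product of the
L-series.
-/

open Complex LSeries
open scoped LSeries.notation

namespace LSeries

lemma term_succ_s13 (f : ℕ → ℂ) (s : ℂ) (n : ℕ) :
    term f s (n + 1) = f (n + 1) * ((n + 1 : ℕ) : ℂ) ^ (-s) := by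
  rw [term_of_ne_zero n.succ_ne_zero, cpow_neg, div_eq_mul_inv]

lemma one_convolution_comp_sq_apply (g : ℕ → ℂ) (n : ℕ) :
    (1 ⍟ fun k => g (k ^ 2)) n = ∑ d ∈ n.divisors, g (n * n / d ^ 2) := by
  simp only [convolution_def, Pi.one_apply, one_mul]
  rw [Nat.sum_divisorsAntidiagonal (f := fun _ b => g (b ^ 2))]
  refine Finset.sum_congr rfl fun d hd => ?_
  have hd0 : 0 < d := Nat.pos_of_mem_divisors hd
  obtain ⟨⟨e, rfl⟩, -⟩ := Nat.mem_divisors.mp hd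
  rw [Nat.mul_div_cancel_left _ hd0, show d * e * (d * e) = d ^ 2 * e ^ 2 by ring,
    Nat.mul_div_cancel_left _ (pow_pos hd0 2)]

end LSeries

namespace LSeriesSummable

variable {f : ℕ → ℂ} {s : ℂ}

lemma summable_norm_succ (h : LSeriesSummable f s) :
    Summable fun n : ℕ => ‖f (n + 1) * ((n + 1 : ℕ) : ℂ) ^ (-s)‖ := by
  simpa only [term_succ_s13] using (summable_nat_add_iff 1).mpr h.norm

lemma LSeries_eq_tsum_succ (h : LSeriesSummable f s) :
    LSeries f s = ∑' n : ℕ, f (n + 1) * ((n + 1 : ℕ) : ℂ) ^ (-s) := by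
  simp only [LSeries, h.tsum_eq_zero_add, term_zero, zero_add, term_succ_s13]

end LSeriesSummable

section PolynomialBound

variable {f : ℕ → ℂ} {A θ : ℝ} {s : ℂ}

lemma LSeriesSummable_sq_of_norm_le_rpow
    (hbound : ∀ n : ℕ, 1 ≤ n → ‖f n‖ ≤ A * (n : ℝ) ^ θ) (hs : 1 + 2 * θ < s.re) :
    LSeriesSummable (fun n => f n ^ 2) s := by
  refine LSeriesSummable_of_le_const_mul_rpow hs ⟨A ^ 2, fun n hn => ?_⟩
  calc ‖f n ^ 2‖ = ‖f n‖ ^ 2 := norm_pow _ _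
    _ ≤ (A * (n : ℝ) ^ θ) ^ 2 := pow_le_pow_left₀ (norm_nonneg _) (hbound n (by omega)) 2
    _ = A ^ 2 * (n : ℝ) ^ (1 + 2 * θ - 1) := by
      rw [add_sub_cancel_left, mul_pow, mul_comm 2 θ, Real.rpow_mul n.cast_nonneg, Real.rpow_two]

lemma LSeriesSummable_comp_sq_of_norm_le_rpow
    (hbound : ∀ n : ℕ, 1 ≤ n → ‖f n‖ ≤ A * (n : ℝ) ^ θ) (hs : 1 + 2 * θ < s.re) :
    LSeriesSummable (fun n => f (n ^ 2)) s := by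
  refine LSeriesSummable_of_le_const_mul_rpow hs ⟨A, fun n hn => ?_⟩
  calc ‖f (n ^ 2)‖ ≤ A * ((n ^ 2 : ℕ) : ℝ) ^ θ :=
        hbound _ (Nat.one_le_iff_ne_zero.mpr (pow_ne_zero 2 hn))
    _ = A * (n : ℝ) ^ (1 + 2 * θ - 1) := by
      rw [add_sub_cancel_left, Nat.cast_pow, Real.rpow_mul n.cast_nonneg, Real.rpow_two]

end PolynomialBound

lemma LSeries_sq_eq_LSeries_one_mul_LSeries_comp_sq {f : ℕ → ℂ}
    (hHecke : ∀ m n : ℕ, 0 < m → 0 < n →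
      f m * f n = ∑ d ∈ (Nat.gcd m n).divisors, f (m * n / d ^ 2))
    {s : ℂ} (hs : 1 < s.re) (hG : LSeriesSummable (fun n => f (n ^ 2)) s) :
    LSeries (fun n => f n ^ 2) s = LSeries 1 s * LSeries (fun n => f (n ^ 2)) s := by
  have hconv : ∀ {n : ℕ}, n ≠ 0 → f n ^ 2 = (1 ⍟ fun k => f (k ^ 2)) n := fun {n} hn => by
    rw [one_convolution_comp_sq_apply, sq, hHecke n n (Nat.pos_of_ne_zero hn)
      (Nat.pos_of_ne_zero hn), Nat.gcd_self]
  rw [LSeries_congr hconv s, LSeries_convolution' (LSeriesSummable_one_iff.mpr hs) hG]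

theorem stmt13_general (f : ℕ → ℂ)
    (hHecke : ∀ m n : ℕ, 0 < m → 0 < n →
      f m * f n = ∑ d ∈ (Nat.gcd m n).divisors, f (m * n / d ^ 2))
    (A θ : ℝ) (hθ : 0 ≤ θ)
    (hbound : ∀ n : ℕ, 1 ≤ n → ‖f n‖ ≤ A * (n : ℝ) ^ θ)
    (s : ℂ) (hs : 1 + 2 * θ < s.re) :
    Summable (fun n : ℕ => ‖f (n + 1) ^ 2 * ((n + 1 : ℕ) : ℂ) ^ (-s)‖) ∧
    Summable (fun n : ℕ => ‖((n + 1 : ℕ) : ℂ) ^ (-s)‖) ∧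
    Summable (fun n : ℕ => ‖f ((n + 1) ^ 2) * ((n + 1 : ℕ) : ℂ) ^ (-s)‖) ∧
    (∑' n : ℕ, f (n + 1) ^ 2 * ((n + 1 : ℕ) : ℂ) ^ (-s)) =
      (∑' n : ℕ, ((n + 1 : ℕ) : ℂ) ^ (-s)) *
        (∑' n : ℕ, f ((n + 1) ^ 2) * ((n + 1 : ℕ) : ℂ) ^ (-s)) := by
  have hs₁ : 1 < s.re := by linarith
  have hsq := LSeriesSummable_sq_of_norm_le_rpow hbound hs
  have hone : LSeriesSummable 1 s := LSeriesSummable_one_iff.mpr hs₁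
  have hcomp := LSeriesSummable_comp_sq_of_norm_le_rpow hbound hs
  have hone_tsum := hone.LSeries_eq_tsum_succ
  simp only [Pi.one_apply, one_mul] at hone_tsum
  refine ⟨hsq.summable_norm_succ, by simpa using hone.summable_norm_succ,
    hcomp.summable_norm_succ, ?_⟩
  rw [← hsq.LSeries_eq_tsum_succ, ← hone_tsum, ← hcomp.LSeries_eq_tsum_succ,
    LSeries_sq_eq_LSeries_one_mul_LSeries_comp_sq hHecke hs₁ hcomp]

/-- (The Dirichlet series identity \eqref{eqn:Dirserieslambda2}.)
If `λ : ℕ₊ → ℂ` satisfies the Hecke relations and `|λ(n)| ≤ A n^θ`, then for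
`Re(s) > 1 + 2θ` the three series converge absolutely and
`Σ λ(n)² n^{-s} = (Σ n^{-s})(Σ λ(n²) n^{-s})`. -/
theorem stmt13 (f : ℕ → ℂ) (hf1 : f 1 = 1)
    (hHecke : ∀ m n : ℕ, 0 < m → 0 < n →
      f m * f n = ∑ d ∈ (Nat.gcd m n).divisors, f (m * n / d ^ 2))
    (A θ : ℝ) (hA : 0 < A) (hθ : 0 ≤ θ)
    (hbound : ∀ n : ℕ, 1 ≤ n → ‖f n‖ ≤ A * (n : ℝ) ^ θ)
    (s : ℂ) (hs : 1 + 2 * θ < s.re) :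
    Summable (fun n : ℕ => ‖f (n + 1) ^ 2 * ((n + 1 : ℕ) : ℂ) ^ (-s)‖) ∧
    Summable (fun n : ℕ => ‖((n + 1 : ℕ) : ℂ) ^ (-s)‖) ∧
    Summable (fun n : ℕ => ‖f ((n + 1) ^ 2) * ((n + 1 : ℕ) : ℂ) ^ (-s)‖) ∧
    (∑' n : ℕ, f (n + 1) ^ 2 * ((n + 1 : ℕ) : ℂ) ^ (-s)) =
      (∑' n : ℕ, ((n + 1 : ℕ) : ℂ) ^ (-s)) *
        (∑' n : ℕ, f ((n + 1) ^ 2) * ((n + 1 : ℕ) : ℂ) ^ (-s)) :=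
  stmt13_general f hHecke A θ hθ hbound s hs
end
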